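/- Downward-support monotonicity of the fluid-correctable decision set: if b⁰ ∈ B and b̃ ∈ ℝ₊^m satisfies H(b̃) ⊆ H(b⁰), then b̃ ∈ B, where H(b) = {h : b_h > 0} and B is the fluid-correctable decision set. -/
import Mathlib


open Matrix

/-- Membership in the fluid-correctable decision set `𝓑`: there exist dual
certificates `y₁, …, y_T ∈ ℝ₊^m` satisfying (B1) `Σ_t y_t ≤ c̃`, (B2)
`Σ_t (y_t)_h = c̃_h` for every staffed pool `h` (i.e. `b_h > 0`), and (B3)
for every `t` and every `h` with `(y_t)_h > 0` there is an activity `j` with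
`hmap j = h` attaining the classwise minimum of `Aᵀ y_t` with
`(Aᵀ y_t)_j ≤ p_{imap j}`. -/
def memB {m n k T : ℕ}
    (A : Matrix (Fin m) (Fin k) ℝ) (ctil : Fin m → ℝ) (p : Fin n → ℝ)
    (hmap : Fin k → Fin m) (imap : Fin k → Fin n)
    (b : Fin m → ℝ) : Prop :=
  ∃ y : Fin T → Fin m → ℝ,
    (∀ t h, 0 ≤ y t h) ∧
    (∀ h, ∑ t, y t h ≤ ctil h) ∧
    (∀ h, 0 < b h → ∑ t, y t h = ctil h) ∧
    (∀ t h, 0 < y t h → ∃ j, hmap j = h ∧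
      (∀ k', imap k' = imap j → Aᵀ.mulVec (y t) j ≤ Aᵀ.mulVec (y t) k') ∧
      Aᵀ.mulVec (y t) j ≤ p (imap j))

/-- Downward-support monotonicity of the fluid-correctable decision set: if
`b⁰ ∈ 𝓑` and the support of `b̃` is contained in that of `b⁰`, then `b̃ ∈ 𝓑`. -/
theorem fluid_correctable_set_support_monotone
    {m n k T : ℕ} (hT : 1 ≤ T)
    (A : Matrix (Fin m) (Fin k) ℝ) (ctil : Fin m → ℝ) (p : Fin n → ℝ)
    (hmap : Fin k → Fin m) (imap : Fin k → Fin n)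
    (hA : ∀ i j, 0 ≤ A i j) (hctil : ∀ h, 0 ≤ ctil h) (hp : ∀ i, 0 ≤ p i)
    (b0 btil : Fin m → ℝ) (hb0 : ∀ h, 0 ≤ b0 h) (hbtil : ∀ h, 0 ≤ btil h)
    (hsupp : { h | 0 < btil h } ⊆ { h | 0 < b0 h })
    (hmem : memB (T := T) A ctil p hmap imap b0) :
    memB (T := T) A ctil p hmap imap btil := by
  obtain ⟨y, hy0, hy1, hy2, hy3⟩ := hmem
  exact ⟨y, hy0, hy1, fun h hh => hy2 h (hsupp hh), hy3⟩
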